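/- arXiv:1908.01345 — 2 statements merged into one kernel-verified Lean document; each statement's English description precedes it below -/
import Mathlib

section
/- For every β ∈ [0, 27/4), the quantity (27-4β)/(3-2√(9-β))² is greater than or equal to 3. Equivalently, setting λ₁ = (3+√(9-β))/2 and θ satisfying tan²θ = 27(1-2m)²/(9-4λ₁)² with β = 27m(1-m), one has tan²θ ≥ 3. -/
theorem stmt3 (β : ℝ) (hβ : β ∈ Set.Ico (0:ℝ) (27/4)) :
    3 ≤ (27 - 4 * β) / (3 - 2 * Real.sqrt (9 - β)) ^ 2 ∧
    ∀ m θ : ℝ, m ∈ Set.Ioo (0:ℝ) 1 → β = 27 * m * (1 - m) →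
      Real.tan θ ^ 2
        = 27 * (1 - 2*m)^2 / (9 - 4 * ((3 + Real.sqrt (9 - β)) / 2)) ^ 2 →
      3 ≤ Real.tan θ ^ 2 := by
  obtain ⟨hβ0, hβ1⟩ := hβ
  set s := Real.sqrt (9 - β) with hs
  have hs0 : 0 ≤ s := Real.sqrt_nonneg _
  have hs2 : s ^ 2 = 9 - β := Real.sq_sqrt (by linarith)
  have hs3 : s ≤ 3 := by nlinarith
  have hsl : 3/2 < s := by nlinarith
  have hmain : 3 ≤ (27 - 4 * β) / (3 - 2 * s) ^ 2 := by
    rw [le_div_iff₀ (by nlinarith)]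
    nlinarith
  refine ⟨hmain, ?_⟩
  intro m θ hm hbm ht
  rw [ht]
  have h1 : 27 * (1 - 2*m)^2 = 27 - 4 * β := by rw [hbm]; ring
  have h2 : (9 - 4 * ((3 + s) / 2)) ^ 2 = (3 - 2 * s) ^ 2 := by ring
  rw [h1, h2]
  exact hmain
end

section
/- The integral ∫₀^{2π} (cos(t/2) - (π/4)·sin t)²/(1 + cos t) dt equals π³/8 - π. Consequently, -3π/2 + (9/2)(π³/8 - π) = (3π/2)(3π²/8 - 4) < 0. -/
/-!
By the half-angle formulas `1 + cos t = 2 cos² (t/2)` and `sin t = 2 sin (t/2) cos (t/2)`, the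
factor `cos² (t/2)` cancels and, for every `a`, the integrand `(cos (t/2) - a sin t)² / (1 + cos t)`
equals the trigonometric polynomial `(1 - 2a sin (t/2))² / 2` except at `t = π`. The latter has the
elementary primitive `t/2 + 4a cos (t/2) + a² (t - sin t)`, so the integral over `[0, 2π]` is
`π - 8a + 2πa²`; at `a = π/4` this is `π³/8 - π`. The sign claim is `3π² < 32`.
-/
open Real Set MeasureTheory intervalIntegral

theorem one_add_cos_eq_two_mul_cos_half_sq (t : ℝ) : 1 + cos t = 2 * cos (t / 2) ^ 2 := by
  rw [cos_sq, mul_div_cancel₀ t two_ne_zero]; ring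

theorem sin_eq_two_mul_sin_half_mul_cos_half (t : ℝ) : sin t = 2 * sin (t / 2) * cos (t / 2) := by
  rw [← sin_two_mul, mul_div_cancel₀ t two_ne_zero]

theorem div_one_add_cos_eq_of_cos_half_ne_zero (a : ℝ) {t : ℝ} (ht : cos (t / 2) ≠ 0) :
    (cos (t / 2) - a * sin t) ^ 2 / (1 + cos t) = (1 - 2 * a * sin (t / 2)) ^ 2 / 2 := by
  rw [one_add_cos_eq_two_mul_cos_half_sq, sin_eq_two_mul_sin_half_mul_cos_half]
  field_simp

theorem cos_half_ne_zero_of_mem_Ioc {t : ℝ} (ht : t ∈ Ioc 0 (2 * π)) (htπ : t ≠ π) :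
    cos (t / 2) ≠ 0 := by
  intro h
  have hmem : t / 2 ∈ Icc 0 π := ⟨by linarith [ht.1], by linarith [ht.2]⟩
  have := injOn_cos hmem ⟨by positivity, by linarith [pi_pos]⟩ (h.trans cos_pi_div_two.symm)
  exact htπ (by linarith)

theorem hasDerivAt_one_sub_mul_sin_half_sq_primitive (a t : ℝ) :
    HasDerivAt (fun t => t / 2 + 4 * a * cos (t / 2) + a ^ 2 * (t - sin t))
      ((1 - 2 * a * sin (t / 2)) ^ 2 / 2) t := by
  have hhalf := (hasDerivAt_id' t).div_const 2
  have h := (hhalf.add (hhalf.cos.const_mul (4 * a))).add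
    (((hasDerivAt_id' t).sub (hasDerivAt_sin t)).const_mul (a ^ 2))
  refine h.congr_deriv ?_
  linear_combination (-2 * a ^ 2) * Real.sin_sq_add_cos_sq (t / 2) -
    a ^ 2 * one_add_cos_eq_two_mul_cos_half_sq t

theorem integral_one_sub_mul_sin_half_sq_div_two (a : ℝ) :
    ∫ t in (0:ℝ)..2 * π, (1 - 2 * a * sin (t / 2)) ^ 2 / 2 = π - 8 * a + 2 * π * a ^ 2 := by
  rw [integral_eq_sub_of_hasDerivAt (fun t _ => hasDerivAt_one_sub_mul_sin_half_sq_primitive a t)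
    (by apply Continuous.intervalIntegrable; fun_prop)]
  simp only [mul_div_cancel_left₀ π two_ne_zero, zero_div, cos_pi, sin_two_pi, cos_zero, sin_zero]
  ring

theorem integral_sq_div_one_add_cos (a : ℝ) :
    ∫ t in (0:ℝ)..2 * π, (cos (t / 2) - a * sin t) ^ 2 / (1 + cos t)
      = π - 8 * a + 2 * π * a ^ 2 := by
  rw [← integral_one_sub_mul_sin_half_sq_div_two]
  refine integral_congr_ae ?_
  filter_upwards [volume.ae_ne π] with t htπ ht
  rw [uIoc_of_le two_pi_pos.le] at ht
  exact div_one_add_cos_eq_of_cos_half_ne_zero a (cos_half_ne_zero_of_mem_Ioc ht htπ)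

theorem stmt9 :
    (∫ t in (0:ℝ)..(2*Real.pi),
        (Real.cos (t/2) - Real.pi/4 * Real.sin t)^2 / (1 + Real.cos t))
      = Real.pi^3/8 - Real.pi ∧
    -3*Real.pi/2 + 9/2 * (Real.pi^3/8 - Real.pi)
      = 3*Real.pi/2 * (3*Real.pi^2/8 - 4) ∧
    3*Real.pi/2 * (3*Real.pi^2/8 - 4) < 0 := by
  refine ⟨?_, by ring, ?_⟩
  · rw [integral_sq_div_one_add_cos]
    ring
  · have hπ2 : 3 * π ^ 2 / 8 < 4 := by nlinarith [pi_pos, pi_lt_d2]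
    nlinarith [pi_pos]
end
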